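/- arXiv:1908.05705 — 5 statements merged into one kernel-verified Lean document; each statement's English description precedes it below -/
import Mathlib

section
/- Let d ∈ ℕ and z ∈ ℂ with Re z > 0. Then the function x ↦ G^d_z(x) is integrable on ℝ^d and ∫_{ℝ^d} |G^d_z(x)| dx ≤ (Re z)^{-1}. -/
open MeasureTheory

/-- The Green's function `G^d_z` of `-Δ + z` on `ℝ^d`, for `Re z > 0`. -/
noncomputable def greenC (d : ℕ) (z : ℂ) (x : EuclideanSpace ℝ (Fin d)) : ℂ :=
  ∫ t in Set.Ioi (0 : ℝ),
    (((4 * Real.pi * t) ^ (-(d : ℝ) / 2) : ℝ) : ℂ) *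
      Complex.exp (-((‖x‖ ^ 2 / (4 * t) : ℝ) : ℂ) - z * (t : ℂ))

private lemma gauss_integrable (d : ℕ) {c : ℝ} (hc : 0 < c) :
    Integrable (fun x : EuclideanSpace ℝ (Fin d) => Real.exp (-c * ‖x‖ ^ 2)) := by
  have h := (GaussianFourier.integrable_cexp_neg_mul_sq_norm_add (b := (c : ℂ))
    (V := EuclideanSpace ℝ (Fin d)) (by simpa using hc) 0 0).norm
  convert h using 2 with x
  simp [Complex.norm_exp, ← Complex.ofReal_pow]

private lemma gauss_integral (d : ℕ) {c : ℝ} (hc : 0 < c) :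
    ∫ x : EuclideanSpace ℝ (Fin d), Real.exp (-c * ‖x‖ ^ 2) = (Real.pi / c) ^ ((d : ℝ) / 2) := by
  rw [GaussianFourier.integral_rexp_neg_mul_sq_norm hc]
  simp

private lemma exp_integral {b : ℝ} (hb : 0 < b) :
    ∫ t in Set.Ioi (0 : ℝ), Real.exp (-(b * t)) = b⁻¹ := by
  have := MeasureTheory.integral_comp_mul_left_Ioi (fun x => Real.exp (-x)) 0 hb
  simp only [mul_zero] at this
  rw [this, integral_exp_neg_Ioi]
  simp

private noncomputable def Fz (d : ℕ) (z : ℂ) (p : EuclideanSpace ℝ (Fin d) × ℝ) : ℂ :=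
  (((4 * Real.pi * p.2) ^ (-(d : ℝ) / 2) : ℝ) : ℂ) *
    Complex.exp (-((‖p.1‖ ^ 2 / (4 * p.2) : ℝ) : ℂ) - z * (p.2 : ℂ))

private lemma Fz_norm (d : ℕ) (z : ℂ) {t : ℝ} (ht : 0 < t) (x : EuclideanSpace ℝ (Fin d)) :
    ‖Fz d z (x, t)‖ = (4 * Real.pi * t) ^ (-(d : ℝ) / 2) * Real.exp (-(t * z.re)) *
      Real.exp (-(4 * t)⁻¹ * ‖x‖ ^ 2) := by
  have h4t : (0 : ℝ) < 4 * Real.pi * t := by have := Real.pi_pos; positivity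
  have ht' : t ≠ 0 := ne_of_gt ht
  simp only [Fz, norm_mul, Complex.norm_real, Real.norm_eq_abs, Complex.norm_exp]
  rw [abs_of_nonneg (Real.rpow_nonneg h4t.le _)]
  have hre : (-((‖x‖ ^ 2 / (4 * t) : ℝ) : ℂ) - z * (t : ℂ)).re
      = -(4 * t)⁻¹ * ‖x‖ ^ 2 + -(t * z.re) := by
    rw [Complex.sub_re, Complex.neg_re, Complex.ofReal_re, Complex.mul_re,
      Complex.ofReal_re, Complex.ofReal_im]
    field_simp
    ring
  rw [hre, Real.exp_add]
  ring

private lemma Fz_intx (d : ℕ) (z : ℂ) {t : ℝ} (ht : 0 < t) :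
    (∫ x : EuclideanSpace ℝ (Fin d), ‖Fz d z (x, t)‖) = Real.exp (-(t * z.re)) := by
  have h4t : (0 : ℝ) < 4 * Real.pi * t := by have := Real.pi_pos; positivity
  have hc : (0 : ℝ) < (4 * t)⁻¹ := by positivity
  rw [integral_congr_ae (Filter.Eventually.of_forall (Fz_norm d z ht)),
    MeasureTheory.integral_const_mul, gauss_integral d hc]
  have hπ : Real.pi / (4 * t)⁻¹ = 4 * Real.pi * t := by rw [div_eq_mul_inv, inv_inv]; ring
  rw [hπ]
  have h1 : (4 * Real.pi * t) ^ (-(d : ℝ) / 2) * (4 * Real.pi * t) ^ ((d : ℝ) / 2) = 1 := by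
    rw [← Real.rpow_add h4t, neg_div, neg_add_cancel, Real.rpow_zero]
  calc (4 * Real.pi * t) ^ (-(d : ℝ) / 2) * Real.exp (-(t * z.re)) *
        (4 * Real.pi * t) ^ ((d : ℝ) / 2)
      = ((4 * Real.pi * t) ^ (-(d : ℝ) / 2) * (4 * Real.pi * t) ^ ((d : ℝ) / 2)) *
          Real.exp (-(t * z.re)) := by ring
    _ = Real.exp (-(t * z.re)) := by rw [h1, one_mul]

private lemma Fz_integrable (d : ℕ) (z : ℂ) (hz : 0 < z.re) :
    Integrable (Fz d z)
      ((volume : Measure (EuclideanSpace ℝ (Fin d))).prod (volume.restrict (Set.Ioi 0))) := by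
  have hmeas : AEStronglyMeasurable (Fz d z)
      ((volume : Measure (EuclideanSpace ℝ (Fin d))).prod (volume.restrict (Set.Ioi 0))) := by
    apply Measurable.aestronglyMeasurable
    unfold Fz
    fun_prop
  rw [MeasureTheory.integrable_prod_iff' hmeas]
  constructor
  · refine (ae_restrict_iff' measurableSet_Ioi).2 (Filter.Eventually.of_forall fun t ht => ?_)
    have ht0 : (0 : ℝ) < t := ht
    have hc : (0 : ℝ) < (4 * t)⁻¹ := by positivity
    refine Integrable.mono' ((gauss_integrable d hc).const_mul
      ((4 * Real.pi * t) ^ (-(d : ℝ) / 2) * Real.exp (-(t * z.re)))) ?_ ?_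
    · apply Measurable.aestronglyMeasurable
      unfold Fz
      fun_prop
    · exact Filter.Eventually.of_forall fun x => le_of_eq (by rw [Fz_norm d z ht0 x])
  · refine (IntegrableOn.congr_fun (exp_neg_integrableOn_Ioi 0 hz) ?_ measurableSet_Ioi)
    intro t ht
    show Real.exp (-z.re * t) = ∫ x : EuclideanSpace ℝ (Fin d), ‖Fz d z (x, t)‖
    rw [Fz_intx d z ht]
    ring_nf

private lemma greenC_eq (d : ℕ) (z : ℂ) (x : EuclideanSpace ℝ (Fin d)) :
    greenC d z x = ∫ t, Fz d z (x, t) ∂(volume.restrict (Set.Ioi 0)) := rfl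

theorem greenC_integrable_and_L1_bound (d : ℕ) (hd : 0 < d) (z : ℂ) (hz : 0 < z.re) :
    Integrable (greenC d z) (volume : Measure (EuclideanSpace ℝ (Fin d))) ∧
    (∫ x : EuclideanSpace ℝ (Fin d), ‖greenC d z x‖) ≤ (z.re)⁻¹ := by
  have hF := Fz_integrable d z hz
  have h1 : Integrable (greenC d z) (volume : Measure (EuclideanSpace ℝ (Fin d))) := by
    have h := hF.integral_prod_left
    exact h.congr (Filter.Eventually.of_forall fun x => (greenC_eq d z x).symm)
  refine ⟨h1, ?_⟩
  have key : (∫ x : EuclideanSpace ℝ (Fin d), ‖greenC d z x‖) ≤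
      ∫ x : EuclideanSpace ℝ (Fin d), ∫ t, ‖Fz d z (x, t)‖ ∂(volume.restrict (Set.Ioi 0)) := by
    refine integral_mono ?_ hF.norm.integral_prod_left fun x => ?_
    · exact h1.norm.congr (Filter.Eventually.of_forall fun x => rfl)
    · rw [greenC_eq d z x]
      exact norm_integral_le_integral_norm _
  refine key.trans ?_
  rw [MeasureTheory.integral_integral_swap (f := fun x t => ‖Fz d z (x, t)‖) hF.norm]
  have heq : (∫ t, ∫ x : EuclideanSpace ℝ (Fin d), ‖Fz d z (x, t)‖
      ∂(volume : Measure (EuclideanSpace ℝ (Fin d))) ∂(volume.restrict (Set.Ioi 0)))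
      = ∫ t in Set.Ioi (0 : ℝ), Real.exp (-(z.re * t)) := by
    refine setIntegral_congr_fun measurableSet_Ioi fun t ht => ?_
    rw [Fz_intx d z ht, mul_comm]
  rw [heq, exp_integral hz]
end

section
/- Let d ∈ ℕ and z ∈ ℂ with Re z > 0. Then for every p ∈ ℝ^d one has ∫_{ℝ^d} exp(−i⟨x,p⟩) G^d_z(x) dx = (|p|² + z)^{-1}. -/
open MeasureTheory

open Complex Real Set in
private lemma aux_rw (d : ℕ) (z : ℂ) (p : EuclideanSpace ℝ (Fin d))
    (t : ℝ) (x : EuclideanSpace ℝ (Fin d)) :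
    Complex.exp (-Complex.I * ((inner ℝ x p : ℝ) : ℂ)) *
        ((((4 * Real.pi * t) ^ (-(d : ℝ) / 2) : ℝ) : ℂ) *
          Complex.exp (-((‖x‖ ^ 2 / (4 * t) : ℝ) : ℂ) - z * (t : ℂ)))
      = ((((4 * Real.pi * t) ^ (-(d : ℝ) / 2) : ℝ) : ℂ) * Complex.exp (-z * t)) *
          Complex.exp (-(((4 * t)⁻¹ : ℝ) : ℂ) * (‖x‖ : ℂ) ^ 2 +
            (-Complex.I) * ((inner ℝ p x : ℝ) : ℂ)) := by
  rw [real_inner_comm p x, mul_left_comm, ← Complex.exp_add,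
    mul_assoc ((((4 * Real.pi * t) ^ (-(d : ℝ) / 2) : ℝ) : ℂ)), ← Complex.exp_add]
  congr 1
  push_cast
  ring

open Complex Real Set in
private lemma aux_inner_integral (d : ℕ) (z : ℂ) (p : EuclideanSpace ℝ (Fin d))
    {t : ℝ} (ht : 0 < t) :
    (∫ x : EuclideanSpace ℝ (Fin d),
        Complex.exp (-Complex.I * ((inner ℝ x p : ℝ) : ℂ)) *
          ((((4 * Real.pi * t) ^ (-(d : ℝ) / 2) : ℝ) : ℂ) *
            Complex.exp (-((‖x‖ ^ 2 / (4 * t) : ℝ) : ℂ) - z * (t : ℂ))))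
      = Complex.exp (-((((‖p‖ ^ 2 : ℝ) : ℂ) + z) * t)) := by
  have hπ := Real.pi_pos
  set b : ℂ := (((4 * t)⁻¹ : ℝ) : ℂ) with hb
  set C : ℂ := (((4 * Real.pi * t) ^ (-(d : ℝ) / 2) : ℝ) : ℂ) with hC
  have hbre : 0 < b.re := by simp [hb]; positivity
  simp_rw [hC, aux_rw d z p t, ← hC]
  rw [integral_const_mul, GaussianFourier.integral_cexp_neg_mul_sq_norm_add hbre (-Complex.I) p,
    finrank_euclideanSpace_fin]
  have h3 : (-Complex.I) ^ 2 * ((‖p‖ : ℂ)) ^ 2 / (4 * b) = -((‖p‖ : ℝ) : ℂ) ^ 2 * t := by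
    have ht0 : (t : ℂ) ≠ 0 := by exact_mod_cast ht.ne'
    rw [hb]; push_cast; field_simp; ring_nf; simp [Complex.I_sq]
  have h2 : C * ((Real.pi : ℂ) / b) ^ ((d : ℂ) / 2) = 1 := by
    have h1 : ((Real.pi : ℂ) / b) = (((4 * Real.pi * t : ℝ)) : ℂ) := by
      rw [hb]; push_cast; field_simp
    rw [h1, hC, Complex.ofReal_cpow (by positivity),
      ← Complex.cpow_add _ _ (Complex.ofReal_ne_zero.mpr (by positivity))]
    convert Complex.cpow_zero _ using 2
    push_cast
    ring
  rw [h3, mul_mul_mul_comm, h2, one_mul, ← Complex.exp_add]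
  congr 1
  push_cast
  ring

open Complex Real Set in
private lemma aux_norm (d : ℕ) (z : ℂ) (p : EuclideanSpace ℝ (Fin d))
    {t : ℝ} (ht : 0 < t) (x : EuclideanSpace ℝ (Fin d)) :
    ‖Complex.exp (-Complex.I * ((inner ℝ x p : ℝ) : ℂ)) *
        ((((4 * Real.pi * t) ^ (-(d : ℝ) / 2) : ℝ) : ℂ) *
          Complex.exp (-((‖x‖ ^ 2 / (4 * t) : ℝ) : ℂ) - z * (t : ℂ)))‖
      = Real.exp (-(z.re * t)) *
          ((4 * Real.pi * t) ^ (-(d : ℝ) / 2) * Real.exp (-(4 * t)⁻¹ * ‖x‖ ^ 2)) := by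
  have hπ := Real.pi_pos
  rw [norm_mul, norm_mul,
    Complex.norm_exp, Complex.norm_exp,
    Complex.norm_of_nonneg (by positivity : (0:ℝ) ≤ (4 * Real.pi * t) ^ (-(d : ℝ) / 2))]
  have h1 : (-Complex.I * ((inner ℝ x p : ℝ) : ℂ)).re = 0 := by simp
  rw [h1, Real.exp_zero, one_mul]
  rw [show Real.exp (-(z.re * t)) * ((4 * Real.pi * t) ^ (-(d : ℝ) / 2) *
      Real.exp (-(4 * t)⁻¹ * ‖x‖ ^ 2)) = (4 * Real.pi * t) ^ (-(d : ℝ) / 2) *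
      (Real.exp (-(4 * t)⁻¹ * ‖x‖ ^ 2) * Real.exp (-(z.re * t))) from by ring,
    ← Real.exp_add]
  congr 2
  simp only [Complex.sub_re, Complex.neg_re, Complex.ofReal_re, Complex.mul_re,
    Complex.ofReal_im, Complex.mul_im]
  field_simp
  ring

open Complex Real Set Filter in
private lemma aux_exp_integral {w : ℂ} (hw : 0 < w.re) :
    ∫ t in Set.Ioi (0:ℝ), Complex.exp (-(w * t)) = w⁻¹ := by
  have hint : IntegrableOn (fun t : ℝ => Complex.exp (-(w * t))) (Set.Ioi 0) := by
    refine (integrable_norm_iff (Continuous.aestronglyMeasurable (by continuity))).mp ?_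
    refine (exp_neg_integrableOn_Ioi 0 hw).congr_fun (fun t ht => ?_) measurableSet_Ioi
    simp [Complex.norm_exp, mul_comm]
  have hderiv : ∀ t ∈ Set.Ici (0:ℝ),
      HasDerivAt (fun t : ℝ => -w⁻¹ * Complex.exp (-(w * t))) (Complex.exp (-(w * t))) t := by
    intro t _
    have hw0 : w ≠ 0 := fun h => by simp [h] at hw
    have h1 : HasDerivAt (fun t : ℝ => -(w * (t:ℂ))) (-w) t := by
      simpa using ((Complex.ofRealCLM.hasDerivAt (x := t)).const_mul w).fun_neg
    have := (h1.cexp).const_mul (-w⁻¹)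
    rw [mul_left_comm, neg_mul_neg, inv_mul_cancel₀ hw0, mul_one] at this
    exact this
  have hten : Filter.Tendsto (fun t : ℝ => -w⁻¹ * Complex.exp (-(w * t)))
      Filter.atTop (nhds 0) := by
    rw [tendsto_zero_iff_norm_tendsto_zero]
    have : (fun t : ℝ => ‖-w⁻¹ * Complex.exp (-(w * t))‖)
        = fun t : ℝ => ‖w⁻¹‖ * Real.exp (-(w.re * t)) := by
      funext t; simp [Complex.norm_exp]
    rw [this, show (0:ℝ) = ‖w⁻¹‖ * 0 by ring]
    exact Filter.Tendsto.const_mul _ (Real.tendsto_exp_atBot.comp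
      (Filter.tendsto_neg_atBot_iff.mpr (Filter.Tendsto.const_mul_atTop hw Filter.tendsto_id)))
  simpa using integral_Ioi_of_hasDerivAt_of_tendsto' hderiv hint hten

theorem greenC_fourier_transform (d : ℕ) (hd : 0 < d) (z : ℂ) (hz : 0 < z.re)
    (p : EuclideanSpace ℝ (Fin d)) :
    (∫ x : EuclideanSpace ℝ (Fin d),
        Complex.exp (-Complex.I * ((inner ℝ x p : ℝ) : ℂ)) * greenC d z x)
      = ((‖p‖ ^ 2 : ℝ) + z)⁻¹ := by
  have hπ := Real.pi_pos
  set f : EuclideanSpace ℝ (Fin d) → ℝ → ℂ := fun x t =>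
    Complex.exp (-Complex.I * ((inner ℝ x p : ℝ) : ℂ)) *
      ((((4 * Real.pi * t) ^ (-(d : ℝ) / 2) : ℝ) : ℂ) *
        Complex.exp (-((‖x‖ ^ 2 / (4 * t) : ℝ) : ℂ) - z * (t : ℂ))) with hf
  have hmeas : AEStronglyMeasurable (Function.uncurry f)
      (volume.prod (volume.restrict (Set.Ioi (0:ℝ)))) := by
    have c1 : Continuous fun q : EuclideanSpace ℝ (Fin d) × ℝ =>
        Complex.exp (-Complex.I * ((inner ℝ q.1 p : ℝ) : ℂ)) :=
      Complex.continuous_exp.comp (continuous_const.mul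
        (Complex.continuous_ofReal.comp (continuous_fst.inner continuous_const)))
    have m2 : Measurable fun q : EuclideanSpace ℝ (Fin d) × ℝ =>
        ((((4 * Real.pi * q.2) ^ (-(d : ℝ) / 2) : ℝ) : ℂ)) :=
      Complex.measurable_ofReal.comp
        ((measurable_snd.const_mul (4 * Real.pi)).pow_const _)
    have m3 : Measurable fun q : EuclideanSpace ℝ (Fin d) × ℝ =>
        Complex.exp (-((‖q.1‖ ^ 2 / (4 * q.2) : ℝ) : ℂ) - z * (q.2 : ℂ)) :=
      Complex.measurable_exp.comp
        (((Complex.measurable_ofReal.comp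
            ((measurable_fst.norm.pow_const 2).div (measurable_snd.const_mul 4))).neg).sub
          ((Complex.measurable_ofReal.comp measurable_snd).const_mul z))
    have : Function.uncurry f = fun q : EuclideanSpace ℝ (Fin d) × ℝ =>
        Complex.exp (-Complex.I * ((inner ℝ q.1 p : ℝ) : ℂ)) *
          ((((4 * Real.pi * q.2) ^ (-(d : ℝ) / 2) : ℝ) : ℂ) *
            Complex.exp (-((‖q.1‖ ^ 2 / (4 * q.2) : ℝ) : ℂ) - z * (q.2 : ℂ))) := by
      funext q; rw [hf]; rfl
    rw [this]
    exact c1.aestronglyMeasurable.mul ((m2.mul m3).aestronglyMeasurable)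
  have hInt : Integrable (Function.uncurry f)
      (volume.prod (volume.restrict (Set.Ioi (0:ℝ)))) := by
    rw [MeasureTheory.integrable_prod_iff' hmeas]
    constructor
    · filter_upwards [ae_restrict_mem measurableSet_Ioi] with t ht
      have ht' : (0:ℝ) < t := ht
      have hbre : 0 < ((((4 * t)⁻¹ : ℝ) : ℂ)).re := by simp; positivity
      exact ((GaussianFourier.integrable_cexp_neg_mul_sq_norm_add hbre (-Complex.I) p).const_mul
        ((((4 * Real.pi * t) ^ (-(d : ℝ) / 2) : ℝ) : ℂ) * Complex.exp (-z * t))).congr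
        (Filter.Eventually.of_forall fun x => (aux_rw d z p t x).symm)
    · have key : ∀ t : ℝ, 0 < t →
          (∫ x : EuclideanSpace ℝ (Fin d), ‖Function.uncurry f (x, t)‖) =
            Real.exp (-z.re * t) := by
        intro t ht
        have hb' : (0:ℝ) < (4 * t)⁻¹ := by positivity
        simp only [Function.uncurry_apply_pair, hf]
        simp_rw [aux_norm d z p ht]
        rw [integral_const_mul, integral_const_mul,
          GaussianFourier.integral_rexp_neg_mul_sq_norm hb', finrank_euclideanSpace_fin]
        rw [show (Real.pi / (4 * t)⁻¹) = 4 * Real.pi * t from by field_simp,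
          ← Real.rpow_add (by positivity),
          show (-(d:ℝ)/2 + (d:ℝ)/2) = 0 from by ring, Real.rpow_zero]
        norm_num
      refine ((exp_neg_integrableOn_Ioi 0 hz).congr_fun (fun t ht => ?_) measurableSet_Ioi)
      exact (key t ht).symm
  calc (∫ x : EuclideanSpace ℝ (Fin d),
        Complex.exp (-Complex.I * ((inner ℝ x p : ℝ) : ℂ)) * greenC d z x)
      = ∫ x : EuclideanSpace ℝ (Fin d), ∫ t in Set.Ioi (0:ℝ), f x t := by
        refine integral_congr_ae (Filter.Eventually.of_forall fun x => ?_)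
        beta_reduce
        unfold greenC
        rw [← integral_const_mul]
    _ = ∫ t in Set.Ioi (0:ℝ), ∫ x : EuclideanSpace ℝ (Fin d), f x t :=
        MeasureTheory.integral_integral_swap hInt
    _ = ∫ t in Set.Ioi (0:ℝ), Complex.exp (-((((‖p‖ ^ 2 : ℝ) : ℂ) + z) * t)) := by
        refine setIntegral_congr_fun measurableSet_Ioi (fun t ht => ?_)
        exact aux_inner_integral d z p ht
    _ = ((‖p‖ ^ 2 : ℝ) + z)⁻¹ := by
        refine aux_exp_integral ?_
        simp only [Complex.add_re, Complex.ofReal_re]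
        exact add_pos_of_nonneg_of_pos (by positivity) hz
end

section
/- Let d₁, d₂ ∈ ℕ, set d = d₁ + d₂, and let z ∈ ℂ with Re z > 0. If x₁ ∈ ℝ^{d₁} with x₁ ≠ 0, or d₁ = 1, then the function x₂ ↦ G^d_z(x₁, x₂) is integrable on ℝ^{d₂} and ∫_{ℝ^{d₂}} G^d_z(x₁, x₂) dx₂ = G^{d₁}_z(x₁). -/
/-!
The integrand of `G^d_z` factors as `e^{-zt} p^d_t`, with `p^d_t` the heat kernel, and
`p^{d₁+d₂}_t(x₁, x₂) = p^{d₁}_t(x₁) p^{d₂}_t(x₂)`. Since `∫ p^{d₂}_t = 1`, integrating out `x₂`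
under the `t`-integral (Fubini) leaves `∫₀^∞ e^{-zt} p^{d₁}_t(x₁) dt = G^{d₁}_z(x₁)`. Fubini applies
because `t ↦ e^{-zt} p^{d₁}_t(x₁)` is integrable: like `t^{-d₁/2} e^{-|x₁|²/4t}` near `0`, which is
bounded if `x₁ ≠ 0` and `t^{-1/2}` if `d₁ = 1`, and like `e^{-t Re z}` at infinity.
-/

open MeasureTheory

/-- The point `(x₁, x₂)` of `ℝ^{d₁+d₂}` obtained by concatenating `x₁ ∈ ℝ^{d₁}` and
`x₂ ∈ ℝ^{d₂}`. -/
noncomputable def epair {d₁ d₂ : ℕ} (x₁ : EuclideanSpace ℝ (Fin d₁))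
    (x₂ : EuclideanSpace ℝ (Fin d₂)) : EuclideanSpace ℝ (Fin (d₁ + d₂)) :=
  (WithLp.equiv 2 (Fin (d₁ + d₂) → ℝ)).symm
    (Fin.append (WithLp.equiv 2 (Fin d₁ → ℝ) x₁) (WithLp.equiv 2 (Fin d₂ → ℝ) x₂))

open Real Set
open scoped Nat

section RpowExpIntegrability

variable {p a c : ℝ}

lemma rpow_neg_mul_exp_neg_div_le (hc : 0 < c) {t : ℝ} (ht : 0 < t) (ht1 : t ≤ 1) :
    t ^ (-p) * rexp (-c / t) ≤ (⌈p⌉₊ ! : ℝ) / c ^ ⌈p⌉₊ := by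
  set n := ⌈p⌉₊
  have hexp : rexp (-c / t) ≤ (n ! : ℝ) / (c / t) ^ n := by
    rw [neg_div, exp_neg, ← inv_div ((c / t) ^ n)]
    exact inv_anti₀ (by positivity) (pow_div_factorial_le_exp (c / t) (by positivity) n)
  have hpow : t ^ (-p) * t ^ n ≤ 1 := by
    rw [← rpow_natCast, ← rpow_add ht]
    exact rpow_le_one ht.le ht1 (by linarith [Nat.le_ceil p])
  calc t ^ (-p) * rexp (-c / t) ≤ t ^ (-p) * ((n ! : ℝ) / (c / t) ^ n) := by gcongr
    _ = (n ! : ℝ) / c ^ n * (t ^ (-p) * t ^ n) := by rw [div_pow, div_div_eq_mul_div]; ring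
    _ ≤ (n ! : ℝ) / c ^ n := mul_le_of_le_one_right (by positivity) hpow

lemma integrableOn_Ioc_rpow_neg_mul_exp_neg_div (hc : 0 ≤ c) (h : 0 < c ∨ p < 1) :
    IntegrableOn (fun t : ℝ => t ^ (-p) * rexp (-c / t)) (Ioc 0 1) := by
  have hmeas : AEStronglyMeasurable (fun t : ℝ => t ^ (-p) * rexp (-c / t))
      (volume.restrict (Ioc 0 1)) := by
    fun_prop
  rcases h with hc | hp
  · refine Integrable.mono'
      (integrableOn_const (C := (⌈p⌉₊ ! : ℝ) / c ^ ⌈p⌉₊) measure_Ioc_lt_top.ne) hmeas ?_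
    filter_upwards [ae_restrict_mem measurableSet_Ioc] with t ht
    rw [Real.norm_of_nonneg (by positivity [ht.1])]
    exact rpow_neg_mul_exp_neg_div_le hc ht.1 ht.2
  · refine Integrable.mono'
      (intervalIntegral.intervalIntegrable_rpow' (r := -p) (by linarith)).1 hmeas ?_
    filter_upwards [ae_restrict_mem measurableSet_Ioc] with t ht
    rw [Real.norm_of_nonneg (by positivity [ht.1])]
    refine mul_le_of_le_one_right (by positivity [ht.1]) (exp_le_one_iff.2 ?_)
    exact div_nonpos_of_nonpos_of_nonneg (by linarith) ht.1.le

lemma integrableOn_rpow_neg_mul_exp_neg_div_sub_mul (hp : 0 ≤ p) (ha : 0 < a) (hc : 0 ≤ c)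
    (h : 0 < c ∨ p < 1) :
    IntegrableOn (fun t : ℝ => t ^ (-p) * rexp (-c / t - a * t)) (Ioi 0) := by
  have hmeas : AEStronglyMeasurable (fun t : ℝ => t ^ (-p) * rexp (-c / t - a * t)) volume := by
    fun_prop
  have hnear : IntegrableOn (fun t : ℝ => t ^ (-p) * rexp (-c / t - a * t)) (Ioc 0 1) := by
    refine (integrableOn_Ioc_rpow_neg_mul_exp_neg_div hc h).mono' hmeas.restrict ?_
    filter_upwards [ae_restrict_mem measurableSet_Ioc] with t ht
    obtain ⟨ht0, -⟩ := ht
    rw [Real.norm_of_nonneg (by positivity)]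
    gcongr
    nlinarith
  have htail : IntegrableOn (fun t : ℝ => t ^ (-p) * rexp (-c / t - a * t)) (Ioi 1) := by
    refine (exp_neg_integrableOn_Ioi 1 ha).mono' hmeas.restrict ?_
    filter_upwards [ae_restrict_mem measurableSet_Ioi] with t (ht : 1 < t)
    rw [Real.norm_of_nonneg (by positivity), neg_mul]
    have hc_div : -c / t ≤ 0 := div_nonpos_of_nonpos_of_nonneg (by linarith) (by linarith)
    calc t ^ (-p) * rexp (-c / t - a * t) ≤ 1 * rexp (-(a * t)) := by
          gcongr
          · exact rpow_le_one_of_one_le_of_nonpos ht.le (by linarith)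
          · linarith
      _ = rexp (-(a * t)) := one_mul _
  rw [← Ioc_union_Ioi_eq_Ioi zero_le_one]
  exact hnear.union htail

end RpowExpIntegrability

lemma norm_epair_sq {d₁ d₂ : ℕ} (x₁ : EuclideanSpace ℝ (Fin d₁))
    (x₂ : EuclideanSpace ℝ (Fin d₂)) :
    ‖epair x₁ x₂‖ ^ 2 = ‖x₁‖ ^ 2 + ‖x₂‖ ^ 2 := by
  simp only [EuclideanSpace.norm_sq_eq, epair, Fin.sum_univ_add, WithLp.equiv_symm_apply,
    Fin.append_left, Fin.append_right, WithLp.equiv_apply]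

noncomputable def heatKernel (d : ℕ) (t : ℝ) (x : EuclideanSpace ℝ (Fin d)) : ℝ :=
  (4 * π * t) ^ (-(d : ℝ) / 2) * rexp (-(‖x‖ ^ 2 / (4 * t)))

namespace heatKernel

variable {d : ℕ} {t : ℝ}

lemma nonneg (ht : 0 ≤ t) (x : EuclideanSpace ℝ (Fin d)) : 0 ≤ heatKernel d t x := by
  unfold heatKernel
  positivity

lemma integral_eq_one (ht : 0 < t) : ∫ x, heatKernel d t x = 1 := by
  have hb : 0 < (4 * t)⁻¹ := by positivity
  have h4πt : 0 < 4 * π * t := by positivity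
  have hexp : ∀ x : EuclideanSpace ℝ (Fin d), -(‖x‖ ^ 2 / (4 * t)) = -(4 * t)⁻¹ * ‖x‖ ^ 2 :=
    fun x => by ring
  simp_rw [heatKernel, hexp]
  rw [integral_const_mul, GaussianFourier.integral_rexp_neg_mul_sq_norm hb,
    finrank_euclideanSpace, Fintype.card_fin, div_inv_eq_mul,
    show π * (4 * t) = 4 * π * t by ring, ← rpow_add h4πt, neg_div, neg_add_cancel, rpow_zero]

lemma integrable (ht : 0 < t) : Integrable (heatKernel d t) :=
  .of_integral_ne_zero <| (integral_eq_one ht).symm ▸ one_ne_zero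

lemma epair_eq_mul {d₁ d₂ : ℕ} (ht : 0 < t) (x₁ : EuclideanSpace ℝ (Fin d₁))
    (x₂ : EuclideanSpace ℝ (Fin d₂)) :
    heatKernel (d₁ + d₂) t (epair x₁ x₂) = heatKernel d₁ t x₁ * heatKernel d₂ t x₂ := by
  have h4πt : 0 < 4 * π * t := by positivity
  simp only [heatKernel, norm_epair_sq, Nat.cast_add]
  rw [show -((d₁ : ℝ) + d₂) / 2 = -d₁ / 2 + -d₂ / 2 by ring, rpow_add h4πt, add_div, neg_add,
    exp_add]
  ring

end heatKernel

lemma greenC_eq_integral_heatKernel (d : ℕ) (z : ℂ) (x : EuclideanSpace ℝ (Fin d)) :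
    greenC d z x = ∫ t in Ioi 0, (heatKernel d t x : ℂ) * Complex.exp (-z * t) := by
  refine setIntegral_congr_fun measurableSet_Ioi fun t _ => ?_
  simp only [heatKernel, Complex.ofReal_mul, Complex.ofReal_exp, Complex.ofReal_neg,
    sub_eq_add_neg, Complex.exp_add, neg_mul]
  ring

section HeatKernelFubini

variable {d : ℕ} {K : ℝ → ℂ}

lemma integrable_mul_heatKernel (hK : IntegrableOn K (Ioi 0)) :
    Integrable (fun q : EuclideanSpace ℝ (Fin d) × ℝ => K q.2 * heatKernel d q.2 q.1)
      (volume.prod (volume.restrict (Ioi 0))) := by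
  have hmeas : AEStronglyMeasurable
      (fun q : EuclideanSpace ℝ (Fin d) × ℝ => K q.2 * heatKernel d q.2 q.1)
      (volume.prod (volume.restrict (Ioi 0))) := by
    refine hK.aestronglyMeasurable.comp_snd.mul (Measurable.aestronglyMeasurable ?_)
    unfold heatKernel
    fun_prop
  refine (integrable_prod_iff' hmeas).2 ⟨?_, ?_⟩
  · filter_upwards [ae_restrict_mem measurableSet_Ioi] with t ht
    exact (heatKernel.integrable ht).ofReal.const_mul (K t)
  · refine hK.norm.congr ?_
    filter_upwards [ae_restrict_mem measurableSet_Ioi] with t (ht : 0 < t)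
    simp only [norm_mul, Complex.norm_real, Real.norm_of_nonneg (heatKernel.nonneg ht.le _),
      integral_const_mul, heatKernel.integral_eq_one ht, mul_one]

lemma integral_integral_mul_heatKernel (hK : IntegrableOn K (Ioi 0)) :
    ∫ x : EuclideanSpace ℝ (Fin d), ∫ t in Ioi 0, K t * heatKernel d t x =
      ∫ t in Ioi 0, K t := by
  rw [integral_integral_swap (integrable_mul_heatKernel hK)]
  refine setIntegral_congr_fun measurableSet_Ioi fun t (ht : 0 < t) => ?_
  rw [integral_const_mul, integral_complex_ofReal, heatKernel.integral_eq_one ht,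
    Complex.ofReal_one, mul_one]

end HeatKernelFubini

lemma integrableOn_heatKernel_mul_cexp {d : ℕ} {z : ℂ} (hz : 0 < z.re)
    {x : EuclideanSpace ℝ (Fin d)} (hx : x ≠ 0 ∨ d < 2) :
    IntegrableOn (fun t => (heatKernel d t x : ℂ) * Complex.exp (-z * t)) (Ioi 0) := by
  have hcase : 0 < ‖x‖ ^ 2 / 4 ∨ (d : ℝ) / 2 < 1 := by
    refine hx.imp (fun hx => by positivity) (fun hd => ?_)
    rw [div_lt_one two_pos]
    exact_mod_cast hd
  have hbound := (integrableOn_rpow_neg_mul_exp_neg_div_sub_mul (by positivity) hz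
    (by positivity) hcase).const_mul ((4 * π) ^ (-(d : ℝ) / 2))
  refine hbound.mono' (Measurable.aestronglyMeasurable ?_) ?_
  · unfold heatKernel
    fun_prop
  filter_upwards [ae_restrict_mem measurableSet_Ioi] with t (ht : 0 < t)
  rw [norm_mul, Complex.norm_real, Real.norm_of_nonneg (heatKernel.nonneg ht.le x),
    Complex.norm_exp, heatKernel, mul_rpow (by positivity) ht.le, mul_assoc, mul_assoc,
    ← exp_add, neg_div]
  apply le_of_eq
  congr 3
  simp only [Complex.neg_re, Complex.mul_re, Complex.ofReal_re, Complex.ofReal_im, mul_zero,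
    sub_zero]
  field_simp
  ring

theorem greenC_integral_second_variable_general (d₁ d₂ : ℕ)
    (z : ℂ) (hz : 0 < z.re) (x₁ : EuclideanSpace ℝ (Fin d₁)) (hx₁ : x₁ ≠ 0 ∨ d₁ = 1) :
    Integrable (fun x₂ : EuclideanSpace ℝ (Fin d₂) => greenC (d₁ + d₂) z (epair x₁ x₂)) volume ∧
    (∫ x₂ : EuclideanSpace ℝ (Fin d₂), greenC (d₁ + d₂) z (epair x₁ x₂)) = greenC d₁ z x₁ := by
  set K : ℝ → ℂ := fun t => (heatKernel d₁ t x₁ : ℂ) * Complex.exp (-z * t)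
  have hK : IntegrableOn K (Ioi 0) :=
    integrableOn_heatKernel_mul_cexp hz (hx₁.imp_right fun h => by omega)
  have hsplit : (fun x₂ => greenC (d₁ + d₂) z (epair x₁ x₂)) =
      fun x₂ : EuclideanSpace ℝ (Fin d₂) => ∫ t in Ioi 0, K t * heatKernel d₂ t x₂ := by
    funext x₂
    rw [greenC_eq_integral_heatKernel]
    refine setIntegral_congr_fun measurableSet_Ioi fun t (ht : 0 < t) => ?_
    rw [heatKernel.epair_eq_mul ht]
    push_cast
    ring
  rw [hsplit, greenC_eq_integral_heatKernel]
  exact ⟨(integrable_mul_heatKernel hK).integral_prod_left, integral_integral_mul_heatKernel hK⟩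

theorem greenC_integral_second_variable (d₁ d₂ : ℕ) (hd₁ : 0 < d₁) (hd₂ : 0 < d₂)
    (z : ℂ) (hz : 0 < z.re) (x₁ : EuclideanSpace ℝ (Fin d₁)) (hx₁ : x₁ ≠ 0 ∨ d₁ = 1) :
    Integrable (fun x₂ : EuclideanSpace ℝ (Fin d₂) => greenC (d₁ + d₂) z (epair x₁ x₂)) volume ∧
    (∫ x₂ : EuclideanSpace ℝ (Fin d₂), greenC (d₁ + d₂) z (epair x₁ x₂)) = greenC d₁ z x₁ :=
  greenC_integral_second_variable_general d₁ d₂ z hz x₁ hx₁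
end

section
/- Let d ∈ ℕ and z ∈ ℂ with Re z > 0. Then for all Q ≥ 0 and all x, x̃ ∈ ℝ^d with x ≠ 0 and x̃ ≠ 0, one has |G^d_{z+Q}(x) − G^d_{z+Q}(x̃)| ≤ |G^d_{Re z}(x) − G^d_{Re z}(x̃)|. -/
open MeasureTheory Set

lemma aux_bounded {c p : ℝ} (hc : 0 < c) (hp : 0 ≤ p) :
    ∃ C : ℝ, 0 < C ∧ ∀ t : ℝ, 0 < t → t ^ (-p) * Real.exp (-(c / t)) ≤ C := by
  obtain ⟨n, hn⟩ := exists_nat_ge p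
  refine ⟨max 1 ((n.factorial : ℝ) / c ^ n), lt_of_lt_of_le one_pos (le_max_left _ _),
    fun t ht => ?_⟩
  rcases le_total 1 t with h1 | h1
  · refine le_trans ?_ (le_max_left _ _)
    have h2 : t ^ (-p) ≤ 1 := Real.rpow_le_one_of_one_le_of_nonpos h1 (by linarith)
    have h3 : Real.exp (-(c / t)) ≤ 1 := Real.exp_le_one_iff.mpr (neg_nonpos.mpr (by positivity))
    nlinarith [Real.rpow_nonneg ht.le (-p), Real.exp_pos (-(c / t))]
  · refine le_trans ?_ (le_max_right _ _)
    have hct : 0 < c / t := div_pos hc ht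
    have he : (c / t) ^ n / (n.factorial : ℝ) ≤ Real.exp (c / t) :=
      Real.pow_div_factorial_le_exp _ hct.le n
    have hfac : (0 : ℝ) < (n.factorial : ℝ) := by positivity
    have hctn : (0 : ℝ) < (c / t) ^ n := pow_pos hct n
    have hexp : Real.exp (-(c / t)) ≤ (n.factorial : ℝ) * t ^ n / c ^ n := by
      rw [Real.exp_neg]
      have h4 : (c / t) ^ n / (n.factorial : ℝ) ≤ Real.exp (c / t) := he
      have h5 : ((n.factorial : ℝ) * t ^ n / c ^ n)⁻¹ ≤ Real.exp (c / t) := by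
        rw [div_pow] at h4
        have heq : ((n.factorial : ℝ) * t ^ n / c ^ n)⁻¹ = c ^ n / t ^ n / (n.factorial : ℝ) := by
          field_simp
        rw [heq]; exact h4
      calc (Real.exp (c / t))⁻¹ ≤ (((n.factorial : ℝ) * t ^ n / c ^ n)⁻¹)⁻¹ :=
            inv_anti₀ (by positivity) h5
        _ = (n.factorial : ℝ) * t ^ n / c ^ n := inv_inv _
    have htp : t ^ (-p) ≤ t ^ (-(n : ℝ)) :=
      Real.rpow_le_rpow_of_exponent_ge ht h1 (by exact_mod_cast neg_le_neg hn)
    have htn : t ^ (-(n : ℝ)) = (t ^ n)⁻¹ := by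
      rw [Real.rpow_neg ht.le, Real.rpow_natCast]
    calc t ^ (-p) * Real.exp (-(c / t))
        ≤ t ^ (-(n : ℝ)) * ((n.factorial : ℝ) * t ^ n / c ^ n) :=
          mul_le_mul htp hexp (Real.exp_pos _).le (Real.rpow_nonneg ht.le _)
      _ = (n.factorial : ℝ) / c ^ n := by
          rw [htn]; field_simp

lemma integrable_greenR_integrand (d : ℕ) {c l : ℝ} (hc : 0 < c) (hl : 0 < l) :
    IntegrableOn
      (fun t : ℝ => (4 * Real.pi * t) ^ (-(d : ℝ) / 2) * Real.exp (-(c / (4 * t)) - l * t))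
      (Ioi 0) := by
  obtain ⟨C, hC, hCb⟩ := aux_bounded (c := c / 4) (p := (d : ℝ) / 2) (by positivity) (by positivity)
  have hmeas : AEStronglyMeasurable
      (fun t : ℝ => (4 * Real.pi * t) ^ (-(d : ℝ) / 2) * Real.exp (-(c / (4 * t)) - l * t))
      (volume.restrict (Ioi 0)) := by
    apply Measurable.aestronglyMeasurable
    fun_prop
  have hint : IntegrableOn (fun t : ℝ => ((4 * Real.pi) ^ (-(d : ℝ) / 2) * C) * Real.exp (-l * t))
      (Ioi 0) := (exp_neg_integrableOn_Ioi 0 hl).const_mul _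
  refine MeasureTheory.Integrable.mono hint hmeas ?_
  filter_upwards [self_mem_ae_restrict measurableSet_Ioi] with t ht
  have ht : (0 : ℝ) < t := ht
  have hb : (4 * Real.pi * t) ^ (-(d : ℝ) / 2)
      = (4 * Real.pi) ^ (-(d : ℝ) / 2) * t ^ (-(d : ℝ) / 2) :=
    Real.mul_rpow (by positivity) ht.le
  have hexp : Real.exp (-(c / (4 * t)) - l * t)
      = Real.exp (-(c / 4 / t)) * Real.exp (-(l * t)) := by
    rw [← Real.exp_add, div_div]; ring_nf
  have hkey : t ^ (-(d : ℝ) / 2) * Real.exp (-(c / 4 / t)) ≤ C := by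
    have h := hCb t ht
    rwa [show -((d : ℝ) / 2) = -(d : ℝ) / 2 by ring] at h
  rw [Real.norm_eq_abs, Real.norm_eq_abs, abs_of_nonneg (by positivity),
    abs_of_nonneg (by positivity), hb, hexp]
  calc (4 * Real.pi) ^ (-(d : ℝ) / 2) * t ^ (-(d : ℝ) / 2)
        * (Real.exp (-(c / 4 / t)) * Real.exp (-(l * t)))
      = (4 * Real.pi) ^ (-(d : ℝ) / 2) * (t ^ (-(d : ℝ) / 2) * Real.exp (-(c / 4 / t)))
        * Real.exp (-(l * t)) := by ring
    _ ≤ (4 * Real.pi) ^ (-(d : ℝ) / 2) * C * Real.exp (-(l * t)) := by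
        have h2 : (0:ℝ) ≤ (4 * Real.pi) ^ (-(d : ℝ) / 2) := by positivity
        exact mul_le_mul_of_nonneg_right (mul_le_mul_of_nonneg_left hkey h2)
          (Real.exp_pos _).le
    _ = (4 * Real.pi) ^ (-(d : ℝ) / 2) * C * Real.exp (-l * t) := by rw [neg_mul]

/-- The Green's function `G^d_λ` for real `λ > 0`. -/
noncomputable def greenR (d : ℕ) (z : ℝ) (x : EuclideanSpace ℝ (Fin d)) : ℝ :=
  ∫ t in Set.Ioi (0 : ℝ),
    (4 * Real.pi * t) ^ (-(d : ℝ) / 2) * Real.exp (-(‖x‖ ^ 2 / (4 * t)) - z * t)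

-- pointwise norm of the complex integrand
lemma norm_integrand (d : ℕ) (w : ℂ) (c : ℝ) {t : ℝ} (ht : 0 < t) :
    ‖(((4 * Real.pi * t) ^ (-(d : ℝ) / 2) : ℝ) : ℂ) *
        Complex.exp (-((c / (4 * t) : ℝ) : ℂ) - w * (t : ℂ))‖
      = (4 * Real.pi * t) ^ (-(d : ℝ) / 2) * Real.exp (-(c / (4 * t)) - w.re * t) := by
  rw [norm_mul, Complex.norm_real, Real.norm_eq_abs,
    abs_of_nonneg (Real.rpow_nonneg (by positivity) _), Complex.norm_exp]
  congr 1
  rw [Complex.sub_re, Complex.neg_re, Complex.ofReal_re, Complex.mul_re, Complex.ofReal_re,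
    Complex.ofReal_im]
  ring

-- integrability of the complex integrand
lemma integrableC (d : ℕ) (w : ℂ) (hw : 0 < w.re) (y : EuclideanSpace ℝ (Fin d)) (hy : y ≠ 0) :
    IntegrableOn
      (fun t : ℝ => (((4 * Real.pi * t) ^ (-(d : ℝ) / 2) : ℝ) : ℂ) *
        Complex.exp (-((‖y‖ ^ 2 / (4 * t) : ℝ) : ℂ) - w * (t : ℂ))) (Ioi 0) := by
  have hc : (0 : ℝ) < ‖y‖ ^ 2 := by
    have := norm_pos_iff.mpr hy
    positivity
  refine Integrable.mono' (integrable_greenR_integrand d hc hw) ?_ ?_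
  · apply Measurable.aestronglyMeasurable
    fun_prop
  · filter_upwards [self_mem_ae_restrict measurableSet_Ioi] with t ht
    exact le_of_eq (norm_integrand d w (‖y‖ ^ 2) ht)

lemma greenC_diff_bound_ord (d : ℕ) (z : ℂ) (hz : 0 < z.re)
    (Q : ℝ) (hQ : 0 ≤ Q) (x x' : EuclideanSpace ℝ (Fin d)) (hx : x ≠ 0) (hx' : x' ≠ 0)
    (hord : ‖x‖ ≤ ‖x'‖) :
    ‖greenC d (z + Q) x - greenC d (z + Q) x'‖
      ≤ greenR d z.re x - greenR d z.re x' := by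
  set w : ℂ := z + Q with hw
  have hwre : w.re = z.re + Q := by simp [hw]
  have hwpos : 0 < w.re := by rw [hwre]; linarith
  have hcx : (0 : ℝ) < ‖x‖ ^ 2 := by have := norm_pos_iff.mpr hx; positivity
  have hcx' : (0 : ℝ) < ‖x'‖ ^ 2 := by have := norm_pos_iff.mpr hx'; positivity
  set F : EuclideanSpace ℝ (Fin d) → ℝ → ℂ := fun y t =>
    (((4 * Real.pi * t) ^ (-(d : ℝ) / 2) : ℝ) : ℂ) *
      Complex.exp (-((‖y‖ ^ 2 / (4 * t) : ℝ) : ℂ) - w * (t : ℂ)) with hF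
  set g : EuclideanSpace ℝ (Fin d) → ℝ → ℝ := fun y t =>
    (4 * Real.pi * t) ^ (-(d : ℝ) / 2) * Real.exp (-(‖y‖ ^ 2 / (4 * t)) - z.re * t) with hg
  have hIntC : ∀ y : EuclideanSpace ℝ (Fin d), y ≠ 0 → IntegrableOn (F y) (Ioi 0) :=
    fun y hy => integrableC d w hwpos y hy
  have hIntR : ∀ y : EuclideanSpace ℝ (Fin d), y ≠ 0 → IntegrableOn (g y) (Ioi 0) := by
    intro y hy
    have hc : (0 : ℝ) < ‖y‖ ^ 2 := by have := norm_pos_iff.mpr hy; positivity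
    exact integrable_greenR_integrand d hc hz
  have hGC : greenC d (z + Q) x - greenC d (z + Q) x'
      = ∫ t in Ioi (0 : ℝ), (F x t - F x' t) := by
    rw [integral_sub (hIntC x hx) (hIntC x' hx')]
    rfl
  have hGR : greenR d z.re x - greenR d z.re x' = ∫ t in Ioi (0 : ℝ), (g x t - g x' t) := by
    rw [integral_sub (hIntR x hx) (hIntR x' hx')]
    rfl
  rw [hGC, hGR]
  refine le_trans (norm_integral_le_integral_norm _) ?_
  refine integral_mono_of_nonneg (ae_of_all _ fun t => norm_nonneg _)
    ((hIntR x hx).sub (hIntR x' hx')) ?_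
  filter_upwards [self_mem_ae_restrict measurableSet_Ioi] with t ht
  have ht : (0 : ℝ) < t := ht
  set r : ℝ := (4 * Real.pi * t) ^ (-(d : ℝ) / 2) with hr
  have hr0 : 0 ≤ r := Real.rpow_nonneg (by positivity) _
  set a : ℝ := ‖x‖ ^ 2 / (4 * t) with ha
  set b : ℝ := ‖x'‖ ^ 2 / (4 * t) with hb
  have hab : a ≤ b := by
    rw [ha, hb]
    have h2 : ‖x‖ ^ 2 ≤ ‖x'‖ ^ 2 := pow_le_pow_left₀ (norm_nonneg x) hord 2
    exact (div_le_div_iff_of_pos_right (by positivity)).mpr h2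
  -- F y t = r * (e^{-a} * exp(-(w*t)))
  have hfac : ∀ c : ℝ, Complex.exp (-((c : ℝ) : ℂ) - w * (t : ℂ))
      = ((Real.exp (-c) : ℝ) : ℂ) * Complex.exp (-(w * (t : ℂ))) := by
    intro c
    rw [Complex.ofReal_exp, ← Complex.exp_add]
    congr 1
    push_cast
    ring
  have hdiff : F x t - F x' t
      = ((r * (Real.exp (-a) - Real.exp (-b)) : ℝ) : ℂ) * Complex.exp (-(w * (t : ℂ))) := by
    rw [hF]
    simp only
    rw [hfac a, hfac b]
    push_cast
    ring
  have hnormexp : ‖Complex.exp (-(w * (t : ℂ)))‖ = Real.exp (-(w.re * t)) := by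
    rw [Complex.norm_exp]
    congr 1
    rw [Complex.neg_re, Complex.mul_re, Complex.ofReal_re, Complex.ofReal_im]
    ring
  rw [hdiff, norm_mul, Complex.norm_real, Real.norm_eq_abs, hnormexp,
    abs_of_nonneg (by nlinarith [Real.exp_le_exp.mpr (neg_le_neg hab)])]
  have hgx : g x t - g x' t = r * (Real.exp (-a) - Real.exp (-b)) * Real.exp (-(z.re * t)) := by
    rw [hg]
    simp only
    rw [show -(‖x‖ ^ 2 / (4 * t)) - z.re * t = -a + -(z.re * t) by rw [ha]; ring,
      show -(‖x'‖ ^ 2 / (4 * t)) - z.re * t = -b + -(z.re * t) by rw [hb]; ring,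
      Real.exp_add, Real.exp_add]
    ring
  rw [hgx]
  have hee : Real.exp (-(w.re * t)) ≤ Real.exp (-(z.re * t)) := by
    apply Real.exp_le_exp.mpr
    rw [hwre]
    nlinarith
  have hd0 : 0 ≤ Real.exp (-a) - Real.exp (-b) :=
    sub_nonneg.mpr (Real.exp_le_exp.mpr (neg_le_neg hab))
  have : 0 ≤ r * (Real.exp (-a) - Real.exp (-b)) := mul_nonneg hr0 hd0
  exact mul_le_mul_of_nonneg_left hee this

theorem greenC_diff_bound (d : ℕ) (hd : 0 < d) (z : ℂ) (hz : 0 < z.re)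
    (Q : ℝ) (hQ : 0 ≤ Q) (x x' : EuclideanSpace ℝ (Fin d)) (hx : x ≠ 0) (hx' : x' ≠ 0) :
    ‖greenC d (z + Q) x - greenC d (z + Q) x'‖
      ≤ |greenR d z.re x - greenR d z.re x'| := by
  rcases le_total ‖x‖ ‖x'‖ with hord | hord
  · refine le_trans (greenC_diff_bound_ord d z hz Q hQ x x' hx hx' hord) ?_
    exact le_abs_self _
  · rw [norm_sub_rev, abs_sub_comm]
    refine le_trans (greenC_diff_bound_ord d z hz Q hQ x' x hx' hx hord) ?_
    exact le_abs_self _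
end

section
/- Let d ≥ 2, s ∈ (0,1), and z ∈ ℂ with Re z > 0. Then there exists a constant C = C(s,z) > 0 such that for all y ∈ ℝ^{d−1}: ∫_{ℝ^{d−1}} |G^d_z(x + y, 0) − G^d_z(x, 0)| dx ≤ C |y|^s. -/
open MeasureTheory

open Real Set
open scoped ENNReal

/-- For `x ∈ ℝ^{d-1}`, the point `(x, 0)` of `ℝ^d` whose first `d - 1` coordinates are
those of `x` and whose last coordinate is `0`. -/
noncomputable def withLastZero {m : ℕ} (x : EuclideanSpace ℝ (Fin m)) :
    EuclideanSpace ℝ (Fin (m + 1)) :=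
  (WithLp.equiv 2 (Fin (m + 1) → ℝ)).symm (Fin.snoc (WithLp.equiv 2 (Fin m → ℝ) x) 0)

lemma norm_withLastZero {m : ℕ} (x : EuclideanSpace ℝ (Fin m)) :
    ‖withLastZero x‖ = ‖x‖ := by
  simp only [EuclideanSpace.norm_eq, withLastZero, WithLp.equiv_symm_apply, PiLp.toLp_apply]
  congr 1
  rw [Fin.sum_univ_castSucc]
  simp [Fin.snoc_castSucc, Fin.snoc_last]

noncomputable def Fg (m : ℕ) (z : ℂ) (x : EuclideanSpace ℝ (Fin m)) (t : ℝ) : ℂ :=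
  (((4 * π * t) ^ (-((m:ℝ)+1) / 2) : ℝ) : ℂ) *
      Complex.exp (-((‖x‖ ^ 2 / (4 * t) : ℝ) : ℂ) - z * (t : ℂ))

lemma exp_sq_diff_aux {u v : ℝ} (hu : 0 ≤ u) (huv : u ≤ v) :
    rexp (-u^2) - rexp (-v^2) ≤ 3 * min 1 (v - u) * (rexp (-u^2/2) + rexp (-v^2/2)) := by
  have e1 : rexp (-u^2) = rexp (-u^2/2) * rexp (-u^2/2) := by
    rw [← Real.exp_add]; ring_nf
  have hpu := Real.exp_pos (-u^2/2)
  have hpv := Real.exp_pos (-v^2/2)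
  have hle1 : rexp (-u^2/2) ≤ 1 := Real.exp_le_one_iff.mpr (by nlinarith)
  rcases le_total 1 (v - u) with h | h
  · rw [min_eq_left h]
    have h2 : rexp (-v^2) ≤ rexp (-v^2/2) * rexp (-v^2/2) := le_of_eq (by
      rw [← Real.exp_add]; ring_nf)
    nlinarith [Real.exp_pos (-v^2), Real.exp_pos (-u^2)]
  · rw [min_eq_right h]
    have key : rexp (-u^2) - rexp (-v^2) ≤ rexp (-u^2) * (v^2 - u^2) := by
      have : rexp (-v^2) = rexp (-u^2) * rexp (-(v^2 - u^2)) := by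
        rw [← Real.exp_add]; ring_nf
      rw [this]
      have h3 : 1 - (v^2 - u^2) ≤ rexp (-(v^2 - u^2)) := by
        have := Real.add_one_le_exp (-(v^2 - u^2)); linarith
      nlinarith [Real.exp_pos (-u^2)]
    have h4 : v^2 - u^2 ≤ (v - u) * (2*u + 1) := by nlinarith
    have h5 : (2*u + 1) * rexp (-u^2/2) ≤ 3 := by
      have h6 := Real.add_one_le_exp (u^2/2)
      have h7 : rexp (u^2/2) * rexp (-u^2/2) = 1 := by
        rw [← Real.exp_add]; ring_nf; exact Real.exp_zero
      nlinarith
    have hvu : 0 ≤ v - u := by linarith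
    calc rexp (-u^2) - rexp (-v^2) ≤ rexp (-u^2) * (v^2 - u^2) := key
    _ ≤ rexp (-u^2) * ((v - u) * (2*u + 1)) := by
        apply mul_le_mul_of_nonneg_left h4 (Real.exp_pos _).le
    _ = (v - u) * ((2*u + 1) * rexp (-u^2/2)) * rexp (-u^2/2) := by rw [e1]; ring
    _ ≤ (v - u) * 3 * rexp (-u^2/2) := by
        apply mul_le_mul_of_nonneg_right _ hpu.le
        exact mul_le_mul_of_nonneg_left h5 hvu
    _ ≤ 3 * (v - u) * (rexp (-u^2/2) + rexp (-v^2/2)) := by nlinarith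

lemma exp_sq_diff {u v : ℝ} (hu : 0 ≤ u) (hv : 0 ≤ v) :
    |rexp (-u^2) - rexp (-v^2)| ≤ 3 * min 1 |u - v| * (rexp (-u^2/2) + rexp (-v^2/2)) := by
  rcases le_total u v with h | h
  · have hmono : rexp (-v^2) ≤ rexp (-u^2) := by gcongr <;> nlinarith
    rw [abs_of_nonneg (by linarith), abs_sub_comm, abs_of_nonneg (by linarith)]
    exact exp_sq_diff_aux hu h
  · have hmono : rexp (-u^2) ≤ rexp (-v^2) := by gcongr <;> nlinarith
    rw [abs_of_nonpos (by linarith), abs_of_nonneg (by linarith)]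
    have := exp_sq_diff_aux hv h
    linarith

lemma min_one_le_rpow {w s : ℝ} (hw : 0 ≤ w) (hs0 : 0 < s) (hs1 : s ≤ 1) :
    min 1 w ≤ w ^ s := by
  rcases eq_or_lt_of_le hw with h | h
  · rw [← h, Real.zero_rpow hs0.ne']
    simp
  rcases le_total w 1 with h1 | h1
  · rw [min_eq_right h1]
    calc w = w ^ (1:ℝ) := (Real.rpow_one w).symm
    _ ≤ w ^ s := Real.rpow_le_rpow_of_exponent_ge h h1 hs1
  · rw [min_eq_left h1]
    calc (1:ℝ) = 1 ^ s := by simp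
    _ ≤ w ^ s := Real.rpow_le_rpow zero_le_one h1 hs0.le

lemma exp_neg_mul_w {n : ℕ} (hn : 1 ≤ n) {w : ℝ} (hw : 0 < w) :
    rexp (-w) ≤ (n : ℝ)^n / w^n := by
  have hn' : (0:ℝ) < n := by exact_mod_cast hn
  have h1 : w / n ≤ rexp (w / n) := by
    have := Real.add_one_le_exp (w / n); linarith
  have h2 : (w / n)^n ≤ rexp (w / n) ^ n := by
    apply pow_le_pow_left₀ (by positivity) h1
  rw [← Real.exp_nat_mul] at h2
  have h3 : (n : ℝ) * (w / n) = w := by field_simp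
  rw [h3] at h2
  rw [div_pow] at h2
  have hwn : 0 < w^n := pow_pos hw n
  have hnn : 0 < (n:ℝ)^n := pow_pos hn' n
  have key : w ^ n ≤ (n:ℝ)^n * rexp w := by
    rw [div_le_iff₀ hnn] at h2; linarith
  rw [Real.exp_neg, le_div_iff₀ hwn]
  have h7 : rexp w * (rexp w)⁻¹ = 1 := mul_inv_cancel₀ (Real.exp_pos w).ne'
  nlinarith [Real.exp_pos w, inv_pos.mpr (Real.exp_pos w)]

lemma integrableOn_rpow_exp (q a : ℝ) (hq : -1 < q) (ha : 0 < a) :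
    IntegrableOn (fun t : ℝ => t ^ q * rexp (-a * t)) (Ioi 0) := by
  have := integrableOn_rpow_mul_exp_neg_mul_rpow hq one_pos ha
  apply this.congr_fun (fun t ht => by rw [Real.rpow_one]) measurableSet_Ioi

lemma integrable_Fg {m : ℕ} {z : ℂ} (hz : 0 < z.re) {x : EuclideanSpace ℝ (Fin m)}
    (hx : x ≠ 0) :
    IntegrableOn (fun t : ℝ => Fg m z x t) (Ioi 0) := by
  have hr : 0 < ‖x‖ := norm_pos_iff.mpr hx
  set r : ℝ := ‖x‖
  set n : ℕ := m + 1 with hn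
  have hn1 : 1 ≤ n := by omega
  set a := z.re
  set C : ℝ := (4*π) ^ (-((m:ℝ)+1) / 2) * ((n : ℝ)^n * (4:ℝ)^n / (r^2)^n) with hC
  have hCpos : 0 < C := by
    have := Real.pi_pos
    have hn' : (0:ℝ) < n := by exact_mod_cast hn1
    apply mul_pos (Real.rpow_pos_of_pos (by linarith) _)
    apply div_pos (mul_pos (pow_pos hn' n) (by positivity)) (pow_pos (by positivity) n)
  apply Integrable.mono' ((integrableOn_rpow_exp (((m:ℝ)+1)/2) a
    (by have := Nat.cast_nonneg (α := ℝ) m; linarith) hz).const_mul C)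
  · apply ContinuousOn.aestronglyMeasurable _ measurableSet_Ioi
    apply ContinuousOn.mul
    · exact Complex.continuous_ofReal.comp_continuousOn
        (((continuous_const.mul continuous_id).continuousOn).rpow_const
          (fun t ht => Or.inl (by have : (0:ℝ) < t := ht; have := Real.pi_pos; simp only [Pi.mul_apply, id]; positivity)))
    · apply Complex.continuous_exp.comp_continuousOn
      apply ContinuousOn.sub
      · apply ContinuousOn.neg
        apply Complex.continuous_ofReal.comp_continuousOn
        apply ContinuousOn.div continuousOn_const (continuous_const.mul continuous_id).continuousOn
        intro t ht
        have : (0:ℝ) < t := ht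
        simp only [Pi.mul_apply, id]
        positivity
      · exact (continuous_const.mul Complex.continuous_ofReal).continuousOn
  · rw [ae_restrict_iff' measurableSet_Ioi]
    filter_upwards with t ht
    have ht0 : (0:ℝ) < t := ht
    have hpi := Real.pi_pos
    have h4pit : (0:ℝ) < 4 * π * t := by positivity
    rw [Fg, norm_mul]
    have hre : ‖Complex.exp (-((r ^ 2 / (4 * t) : ℝ) : ℂ) - z * t)‖
        = rexp (-(r^2/(4*t)) - a * t) := by
      rw [Complex.norm_exp]
      congr 1
      rw [Complex.sub_re, Complex.neg_re, Complex.ofReal_re, Complex.mul_re,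
        Complex.ofReal_re, Complex.ofReal_im]
      ring
    rw [hre]
    have hco : ‖(((4 * π * t) ^ (-((m:ℝ)+1) / 2) : ℝ) : ℂ)‖
        = (4*π)^(-((m:ℝ)+1)/2) * t^(-((m:ℝ)+1)/2) := by
      rw [Complex.norm_real, Real.norm_eq_abs, abs_of_nonneg (Real.rpow_nonneg h4pit.le _),
        ← Real.mul_rpow (by positivity) ht0.le]
    rw [hco]
    have hsplit : rexp (-(r^2/(4*t)) - a * t) = rexp (-(r^2/(4*t))) * rexp (-a * t) := by
      rw [← Real.exp_add]; ring_nf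
    rw [hsplit]
    have hbd : rexp (-(r^2/(4*t))) ≤ (n : ℝ)^n * (4:ℝ)^n / (r^2)^n * t^(n:ℕ) := by
      have := exp_neg_mul_w hn1 (show 0 < r^2/(4*t) by positivity)
      calc rexp (-(r^2/(4*t))) ≤ (n : ℝ)^n / (r^2/(4*t))^n := this
      _ = (n : ℝ)^n * (4:ℝ)^n / (r^2)^n * t^(n:ℕ) := by
          rw [div_pow, mul_pow]
          field_simp
    have htpow : t ^ (-((m:ℝ)+1)/2) * (t:ℝ)^(n:ℕ) = t ^ (((m:ℝ)+1)/2) := by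
      rw [← Real.rpow_natCast t n, ← Real.rpow_add ht0]
      congr 1
      rw [hn]
      push_cast
      ring
    calc (4*π)^(-((m:ℝ)+1)/2) * t^(-((m:ℝ)+1)/2) * (rexp (-(r^2/(4*t))) * rexp (-a * t))
        ≤ (4*π)^(-((m:ℝ)+1)/2) * t^(-((m:ℝ)+1)/2) *
          (((n : ℝ)^n * (4:ℝ)^n / (r^2)^n * t^(n:ℕ)) * rexp (-a * t)) := by
          apply mul_le_mul_of_nonneg_left _ (by positivity)
          exact mul_le_mul_of_nonneg_right hbd (Real.exp_pos _).le
    _ = C * (t ^ (((m:ℝ)+1)/2) * rexp (-a * t)) := by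
        rw [← htpow, hC]; ring

lemma integrable_rexp_gauss (m : ℕ) {b : ℝ} (hb : 0 < b) :
    Integrable (fun x : EuclideanSpace ℝ (Fin m) => rexp (-b * ‖x‖^2)) := by
  have h := (GaussianFourier.integrable_cexp_neg_mul_sq_norm_add
    (b := (b:ℂ)) (by simpa using hb) 0 (0 : EuclideanSpace ℝ (Fin m))).norm
  apply h.congr
  filter_upwards with v
  rw [Complex.norm_exp]
  congr 1
  simp [Complex.mul_re]
  exact Or.inl (by rw [← Complex.ofReal_pow, Complex.ofReal_re])

lemma lintegral_gauss (m : ℕ) {b : ℝ} (hb : 0 < b) :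
    (∫⁻ x : EuclideanSpace ℝ (Fin m), ENNReal.ofReal (rexp (-b * ‖x‖^2))) =
      ENNReal.ofReal ((π / b) ^ ((m:ℝ) / 2)) := by
  rw [← ofReal_integral_eq_lintegral_ofReal (integrable_rexp_gauss m hb)
    (Filter.Eventually.of_forall fun x => (Real.exp_pos _).le)]
  rw [GaussianFourier.integral_rexp_neg_mul_sq_norm hb]
  congr
  simp [finrank_euclideanSpace_fin]

lemma norm_Fg_sub (m : ℕ) (z : ℂ) (x₁ x₂ : EuclideanSpace ℝ (Fin m)) {t : ℝ} (ht : 0 < t) :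
    ‖Fg m z x₁ t - Fg m z x₂ t‖ = (4 * π * t) ^ (-((m:ℝ)+1) / 2) *
      (rexp (-z.re * t) *
        |rexp (-(‖x₁‖/(2*Real.sqrt t))^2) - rexp (-(‖x₂‖/(2*Real.sqrt t))^2)|) := by
  have hst : Real.sqrt t ^ 2 = t := Real.sq_sqrt ht.le
  have hst0 : 0 < Real.sqrt t := Real.sqrt_pos.mpr ht
  have harg : ∀ x : EuclideanSpace ℝ (Fin m),
      (-((‖x‖ ^ 2 / (4 * t) : ℝ) : ℂ) - z * (t : ℂ))
        = ((-(‖x‖/(2*Real.sqrt t))^2 : ℝ) : ℂ) + (- z * t) := by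
    intro x
    push_cast
    rw [div_pow, mul_pow]
    rw [show ((Real.sqrt t : ℂ))^2 = (t : ℂ) by exact_mod_cast congrArg Complex.ofReal hst]
    ring
  have hexp : ∀ x : EuclideanSpace ℝ (Fin m),
      Complex.exp (-((‖x‖ ^ 2 / (4 * t) : ℝ) : ℂ) - z * (t : ℂ))
        = ((rexp (-(‖x‖/(2*Real.sqrt t))^2) : ℝ) : ℂ) * Complex.exp (-z * t) := by
    intro x
    rw [harg, Complex.exp_add, Complex.ofReal_exp]
  simp only [Fg]
  rw [hexp, hexp, ← mul_sub, ← sub_mul, norm_mul, norm_mul, ← Complex.ofReal_sub]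
  rw [Complex.norm_real, Complex.norm_real, Complex.norm_exp]
  have hco : ‖((4 * π * t) ^ (-((m:ℝ)+1) / 2) : ℝ)‖ = (4 * π * t) ^ (-((m:ℝ)+1) / 2) := by
    have := Real.pi_pos
    rw [Real.norm_eq_abs, abs_of_nonneg (Real.rpow_nonneg (by positivity) _)]
  rw [hco]
  have : (-z * (t:ℂ)).re = -z.re * t := by
    rw [Complex.mul_re, Complex.neg_re, Complex.ofReal_re, Complex.ofReal_im, Complex.neg_im]
    ring
  rw [this, Real.norm_eq_abs]
  ring

lemma lintegral_x_bound (m : ℕ) (z : ℂ) (hz : 0 < z.re) {s : ℝ} (hs0 : 0 < s) (hs1 : s < 1)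
    (y : EuclideanSpace ℝ (Fin m)) {t : ℝ} (ht : 0 < t) :
    (∫⁻ x : EuclideanSpace ℝ (Fin m), ENNReal.ofReal ‖Fg m z (x + y) t - Fg m z x t‖)
      ≤ ENNReal.ofReal (‖y‖ ^ s) * ENNReal.ofReal
        ((6 * (4*π)^(-((m:ℝ)+1)/2) * (8*π)^((m:ℝ)/2) * (2:ℝ)^(-s)) *
          (t ^ (-(1+s)/2) * rexp (-z.re * t))) := by
  have hpi := Real.pi_pos
  have hst0 : 0 < Real.sqrt t := Real.sqrt_pos.mpr ht
  have hsq : Real.sqrt t ^ 2 = t := Real.sq_sqrt ht.le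
  set c1 : ℝ := (4 * π * t) ^ (-((m:ℝ)+1) / 2) * rexp (-z.re * t) * (3 * (‖y‖/(2*Real.sqrt t))^s)
    with hc1
  have hc1nn : 0 ≤ c1 := by positivity
  have hptwise : ∀ x : EuclideanSpace ℝ (Fin m),
      ‖Fg m z (x + y) t - Fg m z x t‖ ≤
        c1 * (rexp (-(1/(8*t)) * ‖x+y‖^2) + rexp (-(1/(8*t)) * ‖x‖^2)) := by
    intro x
    rw [norm_Fg_sub m z _ _ ht]
    have hu : (0:ℝ) ≤ ‖x+y‖/(2*Real.sqrt t) := by positivity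
    have hv : (0:ℝ) ≤ ‖x‖/(2*Real.sqrt t) := by positivity
    have h1 := exp_sq_diff hu hv
    have h2 : |‖x+y‖/(2*Real.sqrt t) - ‖x‖/(2*Real.sqrt t)| ≤ ‖y‖/(2*Real.sqrt t) := by
      rw [div_sub_div_same, abs_div, abs_of_pos (by positivity : (0:ℝ) < 2*Real.sqrt t)]
      apply div_le_div_of_nonneg_right _ (by positivity)
      calc |‖x+y‖ - ‖x‖| ≤ ‖(x+y) - x‖ := abs_norm_sub_norm_le _ _
      _ = ‖y‖ := by rw [add_sub_cancel_left]
    have h3 : min 1 |‖x+y‖/(2*Real.sqrt t) - ‖x‖/(2*Real.sqrt t)| ≤ (‖y‖/(2*Real.sqrt t))^s := by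
      refine le_trans (le_trans (min_le_min le_rfl h2) ?_) le_rfl
      exact min_one_le_rpow (by positivity) hs0 hs1.le
    have he1 : -(‖x+y‖/(2*Real.sqrt t))^2/2 = -(1/(8*t)) * ‖x+y‖^2 := by
      rw [div_pow, mul_pow, hsq]; ring
    have he2 : -(‖x‖/(2*Real.sqrt t))^2/2 = -(1/(8*t)) * ‖x‖^2 := by
      rw [div_pow, mul_pow, hsq]; ring
    calc (4 * π * t) ^ (-((m:ℝ)+1) / 2) *
        (rexp (-z.re * t) *
          |rexp (-(‖x+y‖/(2*Real.sqrt t))^2) - rexp (-(‖x‖/(2*Real.sqrt t))^2)|)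
        ≤ (4 * π * t) ^ (-((m:ℝ)+1) / 2) * (rexp (-z.re * t) *
          (3 * (‖y‖/(2*Real.sqrt t))^s *
            (rexp (-(‖x+y‖/(2*Real.sqrt t))^2/2) + rexp (-(‖x‖/(2*Real.sqrt t))^2/2)))) := by
          apply mul_le_mul_of_nonneg_left _ (Real.rpow_nonneg (by positivity) _)
          apply mul_le_mul_of_nonneg_left _ (Real.exp_pos _).le
          refine le_trans h1 ?_
          apply mul_le_mul_of_nonneg_right _ (by positivity)
          have := mul_le_mul_of_nonneg_left h3 (by norm_num : (0:ℝ) ≤ 3)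
          linarith
    _ = c1 * (rexp (-(1/(8*t)) * ‖x+y‖^2) + rexp (-(1/(8*t)) * ‖x‖^2)) := by
          rw [he1, he2] at *
          rw [hc1]; ring
  have hb8 : (0:ℝ) < 1/(8*t) := by positivity
  calc (∫⁻ x : EuclideanSpace ℝ (Fin m), ENNReal.ofReal ‖Fg m z (x + y) t - Fg m z x t‖)
      ≤ ∫⁻ x : EuclideanSpace ℝ (Fin m), ENNReal.ofReal c1 *
          (ENNReal.ofReal (rexp (-(1/(8*t)) * ‖x+y‖^2)) +
           ENNReal.ofReal (rexp (-(1/(8*t)) * ‖x‖^2))) := by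
        apply lintegral_mono fun x => ?_
        rw [← ENNReal.ofReal_add (Real.exp_pos _).le (Real.exp_pos _).le,
          ← ENNReal.ofReal_mul hc1nn]
        exact ENNReal.ofReal_le_ofReal (hptwise x)
  _ = ENNReal.ofReal c1 *
        ((∫⁻ x : EuclideanSpace ℝ (Fin m), ENNReal.ofReal (rexp (-(1/(8*t)) * ‖x+y‖^2))) +
         (∫⁻ x : EuclideanSpace ℝ (Fin m), ENNReal.ofReal (rexp (-(1/(8*t)) * ‖x‖^2)))) := by
        rw [lintegral_const_mul' _ _ ENNReal.ofReal_ne_top, lintegral_add_left (by fun_prop)]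
  _ = ENNReal.ofReal c1 * (ENNReal.ofReal ((π / (1/(8*t))) ^ ((m:ℝ) / 2)) +
        ENNReal.ofReal ((π / (1/(8*t))) ^ ((m:ℝ) / 2))) := by
        rw [lintegral_add_right_eq_self
          (fun x => ENNReal.ofReal (rexp (-(1/(8*t)) * ‖x‖^2))) y,
          lintegral_gauss m hb8]
  _ ≤ ENNReal.ofReal (‖y‖ ^ s) * ENNReal.ofReal
        ((6 * (4*π)^(-((m:ℝ)+1)/2) * (8*π)^((m:ℝ)/2) * (2:ℝ)^(-s)) *
          (t ^ (-(1+s)/2) * rexp (-z.re * t))) := by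
        have hG : (0:ℝ) ≤ (π / (1/(8*t))) ^ ((m:ℝ) / 2) := Real.rpow_nonneg (by positivity) _
        rw [← ENNReal.ofReal_add hG hG, ← ENNReal.ofReal_mul hc1nn]
        refine le_trans (ENNReal.ofReal_le_ofReal (le_of_eq ?_))
          (le_of_eq (ENNReal.ofReal_mul (Real.rpow_nonneg (norm_nonneg y) s)))
        have hgauss_eq : π / (1/(8*t)) = 8 * π * t := by field_simp
        rw [hgauss_eq, hc1]
        rw [Real.mul_rpow (by positivity) ht.le, Real.mul_rpow (by positivity) ht.le,
          Real.div_rpow (norm_nonneg y) (by positivity),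
          Real.mul_rpow (by norm_num) hst0.le,
          Real.sqrt_eq_rpow, ← Real.rpow_mul ht.le,
          Real.rpow_neg (by norm_num : (0:ℝ) ≤ 2)]
        have ht2 : t ^ (-(1+s)/2) = t ^ (-((m:ℝ)+1)/2) * t ^ ((m:ℝ)/2) * (t ^ (1/2*s))⁻¹ := by
          rw [← Real.rpow_neg ht.le, ← Real.rpow_add ht, ← Real.rpow_add ht]
          congr 1; ring
        rw [ht2]
        have h2s : (0:ℝ) < (2:ℝ) ^ s := Real.rpow_pos_of_pos two_pos s
        have hts : (0:ℝ) < t ^ (1/2*s) := Real.rpow_pos_of_pos ht _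
        field_simp
        ring

/-- Statement 8, with `d = m + 1 ≥ 2`. -/
theorem greenC_translation_L1_bound (m : ℕ) (hm : 1 ≤ m) (s : ℝ) (hs : s ∈ Set.Ioo (0 : ℝ) 1)
    (z : ℂ) (hz : 0 < z.re) :
    ∃ C > (0 : ℝ), ∀ y : EuclideanSpace ℝ (Fin m),
      (∫ x : EuclideanSpace ℝ (Fin m),
          ‖greenC (m + 1) z (withLastZero (x + y)) -
            greenC (m + 1) z (withLastZero x)‖)
        ≤ C * ‖y‖ ^ s := by
  obtain ⟨hs0, hs1⟩ := hs
  have hpi := Real.pi_pos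
  set K : ℝ := 6 * (4*π)^(-((m:ℝ)+1)/2) * (8*π)^((m:ℝ)/2) * (2:ℝ)^(-s) with hK
  have hexp_int : IntegrableOn (fun t : ℝ => t ^ (-(1+s)/2) * rexp (-z.re*t)) (Ioi 0) :=
    integrableOn_rpow_exp _ z.re (by linarith) hz
  set C0 : ℝ := ∫ t in Ioi 0, K * (t ^ (-(1+s)/2) * rexp (-z.re*t)) with hC0def
  have hKnn : 0 ≤ K := by positivity
  have hC0nn : 0 ≤ C0 := by
    apply setIntegral_nonneg measurableSet_Ioi
    intro t ht
    have ht0 : (0:ℝ) < t := ht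
    positivity
  refine ⟨C0 + 1, by linarith, fun y => ?_⟩
  have hys : (0:ℝ) ≤ ‖y‖ ^ s := Real.rpow_nonneg (norm_nonneg y) s
  have hgreen : ∀ x : EuclideanSpace ℝ (Fin m),
      greenC (m+1) z (withLastZero x) = ∫ t in Ioi 0, Fg m z x t := by
    intro x
    simp only [greenC, Fg, norm_withLastZero, Nat.cast_add, Nat.cast_one]
  haveI : Nontrivial (EuclideanSpace ℝ (Fin m)) := by
    apply Module.nontrivial_of_finrank_pos (R := ℝ)
    rw [finrank_euclideanSpace_fin]; exact hm
  set D : EuclideanSpace ℝ (Fin m) → ℝ := fun x =>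
    ‖greenC (m+1) z (withLastZero (x+y)) - greenC (m+1) z (withLastZero x)‖ with hD
  have key : (∫⁻ x, ENNReal.ofReal (D x)) ≤ ENNReal.ofReal (C0 * ‖y‖^s) := by
    have step1 : ∀ᵐ x : EuclideanSpace ℝ (Fin m), ENNReal.ofReal (D x) ≤
        ∫⁻ t in Ioi 0, ENNReal.ofReal ‖Fg m z (x+y) t - Fg m z x t‖ := by
      have h0 : ∀ᵐ x : EuclideanSpace ℝ (Fin m), x ≠ 0 := by
        have hset : {x : EuclideanSpace ℝ (Fin m) | ¬ x ≠ 0} = {0} := by ext x; simp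
        rw [ae_iff, hset]; exact measure_singleton 0
      have h1 : ∀ᵐ x : EuclideanSpace ℝ (Fin m), x + y ≠ 0 := by
        have hset : {x : EuclideanSpace ℝ (Fin m) | ¬ x + y ≠ 0} = {-y} := by
          ext x; simp [add_eq_zero_iff_eq_neg]
        rw [ae_iff, hset]; exact measure_singleton _
      filter_upwards [h0, h1] with x hx0 hxy
      have hi1 : IntegrableOn (fun t : ℝ => Fg m z (x+y) t) (Ioi 0) := integrable_Fg hz hxy
      have hi2 : IntegrableOn (fun t : ℝ => Fg m z x t) (Ioi 0) := integrable_Fg hz hx0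
      have hDx : D x = ‖∫ t in Ioi 0, (Fg m z (x+y) t - Fg m z x t)‖ := by
        rw [hD]
        simp only
        rw [hgreen, hgreen, ← integral_sub hi1 hi2]
      rw [hDx]
      exact ENNReal.ofReal_le_of_le_toReal (norm_integral_le_lintegral_norm _)
    calc (∫⁻ x, ENNReal.ofReal (D x))
        ≤ ∫⁻ x, ∫⁻ t in Ioi 0, ENNReal.ofReal ‖Fg m z (x+y) t - Fg m z x t‖ :=
          lintegral_mono_ae step1
    _ = ∫⁻ t in Ioi 0, ∫⁻ x, ENNReal.ofReal ‖Fg m z (x+y) t - Fg m z x t‖ := by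
          apply lintegral_lintegral_swap
          apply Measurable.aemeasurable
          unfold Fg
          fun_prop
    _ ≤ ∫⁻ t in Ioi 0, ENNReal.ofReal (‖y‖^s) *
          ENNReal.ofReal (K * (t ^ (-(1+s)/2) * rexp (-z.re*t))) := by
          refine lintegral_mono_ae ((ae_restrict_iff' measurableSet_Ioi).mpr
            (Filter.Eventually.of_forall fun t ht => ?_))
          exact lintegral_x_bound m z hz hs0 hs1 y ht
    _ = ENNReal.ofReal (‖y‖^s) *
          ∫⁻ t in Ioi 0, ENNReal.ofReal (K * (t ^ (-(1+s)/2) * rexp (-z.re*t))) :=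
          lintegral_const_mul' _ _ ENNReal.ofReal_ne_top
    _ = ENNReal.ofReal (‖y‖^s) * ENNReal.ofReal C0 := by
          rw [hC0def, ofReal_integral_eq_lintegral_ofReal (hexp_int.const_mul K)
            ((ae_restrict_iff' measurableSet_Ioi).mpr (Filter.Eventually.of_forall fun t ht => by
              have ht0 : (0:ℝ) < t := ht
              positivity))]
    _ = ENNReal.ofReal (C0 * ‖y‖^s) := by rw [← ENNReal.ofReal_mul hys, mul_comm]
  by_cases hint : Integrable D
  · have hDnn : 0 ≤ᵐ[volume] D := Filter.Eventually.of_forall fun x => norm_nonneg _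
    calc ∫ x, D x = (∫⁻ x, ENNReal.ofReal (D x)).toReal :=
          integral_eq_lintegral_of_nonneg_ae hDnn hint.aestronglyMeasurable
    _ ≤ C0 * ‖y‖^s := ENNReal.toReal_le_of_le_ofReal (by positivity) key
    _ ≤ (C0+1) * ‖y‖^s := by nlinarith
  · rw [integral_undef hint]
    have : (0:ℝ) ≤ (C0+1) * ‖y‖^s := by positivity
    linarith
end
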